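/- The potential kernel u(x,y) = ∫₀^∞ ∏_{i=1}^n p_t^{θ_i}(x_i,y_i) dt of n independent squared Bessel processes with dimensions θ_i > 0, θ₀ = ∑θ_i > 2, equals (1/2) S^{1−θ₀/2} ∏_i y_i^{θ_i/2−1} ∑_{m=0}^∞ Γ(θ₀/2−1+2m)(S^{−2m}/m!) ∑_{k₁+⋯+kₙ=m} C(m;k) ∏_i (x_i y_i)^{k_i}/Γ(θ_i/2+k_i), where S = ∑_i(x_i+y_i). -/

import Mathlib

/-!
Each density `p_t^θ(x, y)` is a series in `k` whose terms are constants times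
`t^{-(θ/2 + 2k)} e^{-(x+y)/2t}`. Multiplying the `n` series gives a series of nonnegative terms
over multi-indices `k`, the `k`-th one a constant times `t^{-a} e^{-S/2t}` with
`a = θ₀/2 + 2|k| > 1`. By Tonelli it may be integrated term by term, and the substitution
`t = 1/u` gives `∫₀^∞ t^{-a} e^{-b/t} dt = b^{1-a} Γ(a-1)`. Grouping the multi-indices by
`m = |k|`, the factorials combine as `∏ 1/kᵢ! = C(m;k)/m!`.
-/

open Finset

/-- The finite set of tuples `(k₁,…,kₙ)` of nonnegative integers with
`k₁ + ⋯ + kₙ = m`. -/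
def multiIdx (n m : ℕ) : Finset (Fin n → ℕ) :=
  (Fintype.piFinset fun _ : Fin n => Finset.range (m + 1)).filter fun k => ∑ i, k i = m

/-- The Gamma(r/2, 1/2) density `g_r(w) = 2^{−r/2} w^{r/2−1} e^{−w/2}/Γ(r/2)`. -/
noncomputable def gammaDens (r w : ℝ) : ℝ :=
  2 ^ (-r / 2) * w ^ (r / 2 - 1) * Real.exp (-w / 2) / Real.Gamma (r / 2)

/-- The BESQ^θ transition density
`p_t^θ(x,y) = t⁻¹ ∑ₖ e^{−x/2t} (x/2t)^k/k! · g_{θ+2k}(y/t)`. -/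
noncomputable def besqDens (t θ x y : ℝ) : ℝ :=
  t⁻¹ * ∑' k : ℕ,
    Real.exp (-x / (2 * t)) * (x / (2 * t)) ^ k / k.factorial
      * gammaDens (θ + 2 * k) (y / t)

/-- The explicit series for the potential kernel of `n` independent BESQ
processes. -/
noncomputable def potKernel {n : ℕ} (θ : Fin n → ℝ) (x y : Fin n → ℝ) : ℝ :=
  (1 / 2) * ((∑ i, (x i + y i)) ^ ((1 : ℝ) - (∑ i, θ i) / 2))
    * (∏ i, y i ^ (θ i / 2 - 1)) *
    ∑' m : ℕ,
      Real.Gamma ((∑ i, θ i) / 2 - 1 + 2 * m)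
        * ((∑ i, (x i + y i)) ^ (-(2 : ℝ) * m) / m.factorial) *
        ∑ k ∈ multiIdx n m,
          (Nat.multinomial Finset.univ k : ℝ) *
            ∏ i, (x i * y i) ^ (k i) / Real.Gamma (θ i / 2 + k i)

open Real MeasureTheory Set Filter
open scoped Nat ENNReal

lemma summable_pow_div_factorial_mul_Gamma {c w : ℝ} (hc : 0 < c) (hw : 0 < w) :
    Summable fun k : ℕ => w ^ k / (k ! * Gamma (c + k)) := by
  have hΓ : ∀ k : ℕ, 0 < Gamma (c + k) := fun k => Gamma_pos_of_pos (by positivity)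
  have hpos : ∀ k : ℕ, 0 < w ^ k / (k ! * Gamma (c + k)) := fun k => by
    have := hΓ k
    positivity
  refine summable_of_ratio_test_tendsto_lt_one zero_lt_one
    (Eventually.of_forall fun k => (hpos k).ne') ?_
  have hratio : ∀ k : ℕ, ‖w ^ (k + 1) / ((k + 1)! * Gamma (c + (k + 1 : ℕ)))‖
      / ‖w ^ k / (k ! * Gamma (c + k))‖ = w / ((k + 1) * (c + k)) := by
    intro k
    have := hΓ k
    have hΓsucc : Gamma (c + (k + 1 : ℕ)) = (c + k) * Gamma (c + k) := by
      rw [Nat.cast_add_one, ← add_assoc, Gamma_add_one (by positivity : 0 < c + k).ne']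
    rw [Real.norm_of_nonneg (hpos _).le, Real.norm_of_nonneg (hpos k).le, hΓsucc,
      Nat.factorial_succ]
    push_cast
    field_simp
    ring
  simp_rw [hratio]
  refine tendsto_const_nhds.div_atTop (Tendsto.atTop_mul_atTop₀ ?_ ?_)
  · exact tendsto_atTop_add_const_right _ 1 tendsto_natCast_atTop_atTop
  · exact tendsto_atTop_add_const_left _ c tendsto_natCast_atTop_atTop

lemma prod_pow_div_factorial_mul {ι : Type*} (s : Finset ι) (a b : ι → ℝ) (k : ι → ℕ) :
    ∏ i ∈ s, a i ^ k i / ((k i)! * b i)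
      = Nat.multinomial s k / (∑ i ∈ s, k i)! * ∏ i ∈ s, a i ^ k i / b i := by
  rw [← Nat.multinomial_spec s k, Nat.cast_mul, Nat.cast_prod]
  have : (Nat.multinomial s k : ℝ) ≠ 0 := by exact_mod_cast (Nat.multinomial_pos s k).ne'
  simp only [div_eq_mul_inv, mul_inv, Finset.prod_mul_distrib, Finset.prod_inv_distrib]
  field_simp

lemma prod_mul_rpow_neg_mul_exp_neg_div {ι : Type*} (s : Finset ι) {t : ℝ} (ht : 0 < t)
    (c a b : ι → ℝ) :
    ∏ i ∈ s, c i * (t ^ (-a i) * exp (-b i / t))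
      = (∏ i ∈ s, c i) * (t ^ (-∑ i ∈ s, a i) * exp (-(∑ i ∈ s, b i) / t)) := by
  rw [Finset.prod_mul_distrib, Finset.prod_mul_distrib, ← exp_sum, ← rpow_sum_of_pos ht]
  simp only [Finset.sum_neg_distrib, Finset.sum_div, neg_div]

lemma lintegral_rpow_neg_mul_exp_neg_div {a b : ℝ} (ha : 1 < a) (hb : 0 < b) :
    ∫⁻ t in Ioi 0, ENNReal.ofReal (t ^ (-a) * exp (-b / t))
      = ENNReal.ofReal (b ^ (1 - a) * Gamma (a - 1)) := by
  set g : ℝ → ℝ := fun u => u ^ (a - 2) * exp (-b * u ^ (1 : ℝ))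
  -- the substitution `t = u⁻¹` turns the integral into a Gamma integral
  have hsubst : EqOn (fun t => (|(-1 : ℝ)| * t ^ ((-1 : ℝ) - 1)) • g (t ^ (-1 : ℝ)))
      (fun t => t ^ (-a) * exp (-b / t)) (Ioi 0) := by
    intro t (ht : 0 < t)
    simp only [g, smul_eq_mul, abs_neg, abs_one, one_mul, rpow_one, rpow_neg_one]
    rw [inv_rpow ht.le, ← rpow_neg ht.le, ← mul_assoc, ← rpow_add ht, div_eq_mul_inv]
    ring_nf
  have hint : IntegrableOn (fun t => t ^ (-a) * exp (-b / t)) (Ioi 0) :=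
    (integrableOn_congr_fun hsubst measurableSet_Ioi).mp
      ((integrableOn_Ioi_comp_rpow_iff g (by norm_num)).mpr
        (integrableOn_rpow_mul_exp_neg_mul_rpow (by linarith) one_pos hb))
  have hval : ∫ t in Ioi 0, t ^ (-a) * exp (-b / t) = b ^ (1 - a) * Gamma (a - 1) := by
    rw [← setIntegral_congr_fun measurableSet_Ioi hsubst, integral_comp_rpow_Ioi g (by norm_num),
      integral_rpow_mul_exp_neg_mul_rpow one_pos (by linarith) hb]
    norm_num [show a - 2 + 1 = a - 1 by ring]
  rw [← hval, ofReal_integral_eq_lintegral_ofReal hint]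
  exact (ae_restrict_iff' measurableSet_Ioi).mpr (Eventually.of_forall fun t (ht : 0 < t) => by
    positivity)

theorem ENNReal.prod_univ_tsum {β : Type*} :
    ∀ {n : ℕ} (f : Fin n → β → ℝ≥0∞), ∏ i, ∑' b, f i b = ∑' k : Fin n → β, ∏ i, f i (k i)
  | 0, f => by
    rw [Finset.univ_eq_empty, Finset.prod_empty, tsum_eq_single (default : Fin 0 → β)
      fun k hk => (hk (Subsingleton.elim k default)).elim]
    simp
  | n + 1, f => by
    rw [Fin.prod_univ_succ, ENNReal.prod_univ_tsum fun i => f i.succ,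
      ← ENNReal.tsum_mul_right]
    simp_rw [← ENNReal.tsum_mul_left]
    rw [← ENNReal.tsum_prod, ← (Fin.consEquiv fun _ => β).tsum_eq]
    simp [Fin.prod_univ_succ]

lemma integral_eq_tsum_of_ofReal_eq_tsum {α ι : Type*} [MeasurableSpace α] [Countable ι]
    {μ : Measure α} {f : α → ℝ} {g : ι → α → ℝ≥0∞} {c : ι → ℝ}
    (hf : ∀ᵐ a ∂μ, 0 ≤ f a ∧ ENNReal.ofReal (f a) = ∑' i, g i a) (hg : ∀ i, AEMeasurable (g i) μ)
    (hc : ∀ i, ∫⁻ a, g i a ∂μ = ENNReal.ofReal (c i)) (hc0 : ∀ i, 0 ≤ c i) :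
    ∫ a, f a ∂μ = ∑' i, c i := by
  have hf_eq : (fun a => (∑' i, g i a).toReal) =ᵐ[μ] f := hf.mono fun a ⟨h0, h⟩ => by
    simp only [← h, ENNReal.toReal_ofReal h0]
  rw [integral_eq_lintegral_of_nonneg_ae (hf.mono fun a h => h.1)
      ((AEMeasurable.tsum hg).ennreal_toReal.aestronglyMeasurable.congr hf_eq),
    lintegral_congr_ae (hf.mono fun a h => h.2), lintegral_tsum hg,
    ENNReal.tsum_toReal_eq fun i => hc i ▸ ENNReal.ofReal_ne_top]
  simp_rw [hc, ENNReal.toReal_ofReal (hc0 _)]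

lemma multiIdx_eq_antidiagonalTuple (n m : ℕ) :
    multiIdx n m = Finset.Nat.antidiagonalTuple n m := by
  ext k
  rw [Finset.Nat.mem_antidiagonalTuple, multiIdx, Finset.mem_filter, Fintype.mem_piFinset,
    and_iff_right_iff_imp]
  rintro rfl i
  exact Finset.mem_range_succ_iff.mpr (Finset.single_le_sum (fun j _ => (k j).zero_le)
    (Finset.mem_univ i))

lemma mem_multiIdx {n m : ℕ} {k : Fin n → ℕ} : k ∈ multiIdx n m ↔ ∑ i, k i = m := by
  rw [multiIdx_eq_antidiagonalTuple, Finset.Nat.mem_antidiagonalTuple]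

theorem ENNReal.tsum_eq_tsum_sum_multiIdx {n : ℕ} (f : (Fin n → ℕ) → ℝ≥0∞) :
    ∑' k, f k = ∑' m, ∑ k ∈ multiIdx n m, f k := by
  simp_rw [multiIdx_eq_antidiagonalTuple, ← Finset.tsum_subtype]
  rw [← (Finset.Nat.sigmaAntidiagonalTupleEquivTuple n).tsum_eq, ENNReal.tsum_sigma']
  rfl

noncomputable def besqCoeff (θ x y : ℝ) (k : ℕ) : ℝ :=
  2 ^ (-θ / 2) * y ^ (θ / 2 - 1) * ((x * y / 4) ^ k / (k ! * Gamma (θ / 2 + k)))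

lemma besqCoeff_nonneg {θ x y : ℝ} (hθ : 0 < θ) (hx : 0 ≤ x) (hy : 0 ≤ y) (k : ℕ) :
    0 ≤ besqCoeff θ x y k := by
  have := Gamma_pos_of_pos (by positivity : 0 < θ / 2 + k)
  unfold besqCoeff
  positivity

lemma besqDens_eq_tsum {t θ x y : ℝ} (ht : 0 < t) (hy : 0 < y) :
    besqDens t θ x y
      = ∑' k : ℕ, besqCoeff θ x y k * (t ^ (-(θ / 2 + 2 * k)) * exp (-((x + y) / 2) / t)) := by
  rw [besqDens, ← tsum_mul_left]
  refine tsum_congr fun k => ?_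
  have h2 : (2 : ℝ) ^ (-(θ + 2 * k) / 2) = 2 ^ (-θ / 2) / 2 ^ k := by
    rw [show -(θ + 2 * k) / 2 = -θ / 2 - k by ring, rpow_sub two_pos, rpow_natCast]
  have hyt : (y / t) ^ ((θ + 2 * k) / 2 - 1)
      = y ^ (θ / 2 - 1) * y ^ k / (t ^ (θ / 2 - 1) * t ^ k) := by
    rw [show (θ + 2 * k) / 2 - 1 = (θ / 2 - 1) + k by ring, rpow_add (div_pos hy ht),
      div_rpow hy.le ht.le, rpow_natCast, div_pow]
    ring
  have htk : t ^ (-(θ / 2 + 2 * k)) = (t ^ (θ / 2 - 1) * t * (t ^ k) ^ 2)⁻¹ := by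
    rw [show -(θ / 2 + 2 * k) = -((θ / 2 - 1) + 1 + 2 * (k : ℕ)) by ring, rpow_neg ht.le,
      rpow_add ht, rpow_add ht, rpow_one, rpow_mul_natCast ht.le, rpow_two]
    ring
  have hexp : exp (-x / (2 * t)) * exp (-(y / t) / 2) = exp (-((x + y) / 2) / t) := by
    rw [← exp_add]; congr 1; field_simp; ring
  have h4 : (x * y / 4) ^ k = x ^ k * y ^ k / (2 ^ k) ^ 2 := by
    rw [div_pow, mul_pow, ← pow_mul, mul_comm k, pow_mul]; norm_num
  rw [gammaDens, h2, hyt, htk, show (θ + 2 * k) / 2 = θ / 2 + k by ring, besqCoeff, h4, div_pow,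
    ← hexp]
  have : 0 < t ^ (θ / 2 - 1) := by positivity
  field_simp
  ring

lemma summable_besqCoeff_mul {t θ x y : ℝ} (ht : 0 < t) (hθ : 0 < θ) (hx : 0 < x) (hy : 0 < y) :
    Summable fun k : ℕ =>
      besqCoeff θ x y k * (t ^ (-(θ / 2 + 2 * k)) * exp (-((x + y) / 2) / t)) := by
  have hterm : ∀ k : ℕ,
      besqCoeff θ x y k * (t ^ (-(θ / 2 + 2 * k)) * exp (-((x + y) / 2) / t))
        = 2 ^ (-θ / 2) * y ^ (θ / 2 - 1) * t ^ (-(θ / 2)) * exp (-((x + y) / 2) / t)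
          * ((x * y / 4 / t ^ 2) ^ k / (k ! * Gamma (θ / 2 + k))) := by
    intro k
    rw [show -(θ / 2 + 2 * k) = -(θ / 2) + (-2 : ℤ) * (k : ℕ) by push_cast; ring,
      rpow_add ht, rpow_intCast_mul ht.le, rpow_natCast, div_pow _ (t ^ 2), besqCoeff]
    simp only [zpow_neg, zpow_ofNat, inv_pow]
    ring
  simp_rw [hterm]
  exact (summable_pow_div_factorial_mul_Gamma (by positivity) (by positivity)).mul_left _

lemma besqDens_nonneg {t θ x y : ℝ} (ht : 0 < t) (hθ : 0 < θ) (hx : 0 ≤ x) (hy : 0 < y) :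
    0 ≤ besqDens t θ x y := by
  rw [besqDens_eq_tsum ht hy]
  exact tsum_nonneg fun k => mul_nonneg (besqCoeff_nonneg hθ hx hy.le k) (by positivity)

lemma ofReal_prod_besqDens {n : ℕ} {θ x y : Fin n → ℝ} (hθ : ∀ i, 0 < θ i)
    (hx : ∀ i, 0 < x i) (hy : ∀ i, 0 < y i) {t : ℝ} (ht : 0 < t) :
    ENNReal.ofReal (∏ i, besqDens t (θ i) (x i) (y i))
      = ∑' m : ℕ, ENNReal.ofReal
          ((∑ k ∈ multiIdx n m, ∏ i, besqCoeff (θ i) (x i) (y i) (k i))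
            * (t ^ (-((∑ i, θ i) / 2 + 2 * m)) * exp (-((∑ i, (x i + y i)) / 2) / t))) := by
  have hterm : ∀ i k, 0 ≤ besqCoeff (θ i) (x i) (y i) k
      * (t ^ (-(θ i / 2 + 2 * k)) * exp (-((x i + y i) / 2) / t)) := fun i k =>
    mul_nonneg (besqCoeff_nonneg (hθ i) (hx i).le (hy i).le k) (by positivity)
  have hcoeff : ∀ k : Fin n → ℕ, 0 ≤ ∏ i, besqCoeff (θ i) (x i) (y i) (k i) := fun k =>
    Finset.prod_nonneg fun i _ => besqCoeff_nonneg (hθ i) (hx i).le (hy i).le (k i)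
  rw [ENNReal.ofReal_prod_of_nonneg fun i _ => besqDens_nonneg ht (hθ i) (hx i).le (hy i)]
  simp_rw [besqDens_eq_tsum ht (hy _), ENNReal.ofReal_tsum_of_nonneg (hterm _)
    (summable_besqCoeff_mul ht (hθ _) (hx _) (hy _)), ENNReal.prod_univ_tsum,
    ← ENNReal.ofReal_prod_of_nonneg fun i _ => hterm i _,
    prod_mul_rpow_neg_mul_exp_neg_div _ ht, ENNReal.tsum_eq_tsum_sum_multiIdx]
  refine tsum_congr fun m => ?_
  rw [Finset.sum_mul, ENNReal.ofReal_sum_of_nonneg fun k _ => mul_nonneg (hcoeff k) (by positivity)]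
  refine Finset.sum_congr rfl fun k hk => ?_
  rw [Finset.sum_add_distrib, ← Finset.sum_div, ← Finset.sum_div, ← Finset.mul_sum,
    ← Nat.cast_sum, mem_multiIdx.mp hk]

lemma sum_multiIdx_prod_besqCoeff {n : ℕ} (θ x y : Fin n → ℝ) (m : ℕ) :
    ∑ k ∈ multiIdx n m, ∏ i, besqCoeff (θ i) (x i) (y i) (k i)
      = 2 ^ (-((∑ i, θ i) / 2)) * (∏ i, y i ^ (θ i / 2 - 1)) / 4 ^ m / m !
        * ∑ k ∈ multiIdx n m, (Nat.multinomial Finset.univ k : ℝ)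
            * ∏ i, (x i * y i) ^ (k i) / Gamma (θ i / 2 + k i) := by
  rw [Finset.mul_sum]
  refine Finset.sum_congr rfl fun k hk => ?_
  have h2 : ∏ i, (2 : ℝ) ^ (-θ i / 2) = 2 ^ (-((∑ i, θ i) / 2)) := by
    rw [← rpow_sum_of_pos two_pos, Finset.sum_div, ← Finset.sum_neg_distrib]
    simp only [neg_div]
  have h4 : ∏ i, (x i * y i / 4) ^ k i / Gamma (θ i / 2 + k i)
      = (∏ i, (x i * y i) ^ (k i) / Gamma (θ i / 2 + k i)) / 4 ^ m := by
    calc ∏ i, (x i * y i / 4) ^ k i / Gamma (θ i / 2 + k i)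
        = ∏ i, (x i * y i) ^ (k i) / Gamma (θ i / 2 + k i) * ((4 : ℝ) ^ k i)⁻¹ :=
          Finset.prod_congr rfl fun i _ => by rw [div_pow]; ring
      _ = _ := by
          rw [Finset.prod_mul_distrib, Finset.prod_inv_distrib, Finset.prod_pow_eq_pow_sum,
            mem_multiIdx.mp hk, div_eq_mul_inv]
  simp only [besqCoeff, Finset.prod_mul_distrib]
  rw [prod_pow_div_factorial_mul, h2, h4, mem_multiIdx.mp hk]
  ring

lemma potKernel_eq_tsum {n : ℕ} (θ x y : Fin n → ℝ) (hS : 0 < ∑ i, (x i + y i)) :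
    potKernel θ x y
      = ∑' m : ℕ, (∑ k ∈ multiIdx n m, ∏ i, besqCoeff (θ i) (x i) (y i) (k i))
          * (((∑ i, (x i + y i)) / 2) ^ (1 - ((∑ i, θ i) / 2 + 2 * m))
            * Gamma ((∑ i, θ i) / 2 + 2 * m - 1)) := by
  set S := ∑ i, (x i + y i)
  set A := (∑ i, θ i) / 2
  have hconst : ∀ m : ℕ, 2 ^ (-A) / 4 ^ m * (S / 2) ^ (1 - (A + 2 * m))
      = 1 / 2 * S ^ (1 - A) * S ^ (-2 * m : ℝ) := fun m => by
    rw [div_rpow hS.le zero_le_two, show 1 - (A + 2 * m) = (1 - A) + (-2 * m : ℝ) by ring,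
      rpow_add hS, show (4 : ℝ) ^ m = 2 ^ (2 * m : ℝ) by norm_num [rpow_mul_natCast, ← pow_mul],
      div_eq_mul_inv, ← rpow_neg zero_le_two, div_eq_mul_inv _ ((2 : ℝ) ^ _),
      ← rpow_neg zero_le_two]
    have h2 : (2 : ℝ) ^ (-A) * 2 ^ (-(2 * m : ℝ)) * 2 ^ (-(1 - A + -2 * m : ℝ)) = 1 / 2 := by
      rw [← rpow_add two_pos, ← rpow_add two_pos,
        show -A + -(2 * m : ℝ) + -(1 - A + -2 * m) = -1 by ring, rpow_neg_one, one_div]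
    linear_combination S ^ (1 - A) * S ^ (-2 * m : ℝ) * h2
  rw [potKernel, ← tsum_mul_left]
  refine tsum_congr fun m => ?_
  rw [sum_multiIdx_prod_besqCoeff, show A + 2 * m - 1 = A - 1 + 2 * m by ring]
  linear_combination
    -(∏ i, y i ^ (θ i / 2 - 1)) * Gamma (A - 1 + 2 * m) / m !
      * (∑ k ∈ multiIdx n m, (Nat.multinomial Finset.univ k : ℝ)
          * ∏ i, (x i * y i) ^ (k i) / Gamma (θ i / 2 + k i))
      * hconst m

/-- the potential kernel `u(x,y) = ∫₀^∞ ∏ᵢ p_t^{θᵢ}(xᵢ,yᵢ) dt`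
equals the explicit series `potKernel`. -/
theorem stmt12 (n : ℕ) (θ : Fin n → ℝ) (hθ : ∀ i, 0 < θ i) (hθ0 : 2 < ∑ i, θ i)
    (x y : Fin n → ℝ) (hx : ∀ i, 0 < x i) (hy : ∀ i, 0 < y i) :
    ∫ t in Set.Ioi (0 : ℝ), ∏ i, besqDens t (θ i) (x i) (y i)
      = potKernel θ x y := by
  have hn : Nonempty (Fin n) := by
    refine Fin.pos_iff_nonempty.mp (Nat.pos_of_ne_zero ?_)
    rintro rfl
    norm_num at hθ0
  have hS : 0 < ∑ i, (x i + y i) :=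
    Finset.sum_pos (fun i _ => add_pos (hx i) (hy i)) Finset.univ_nonempty
  have ha : ∀ m : ℕ, 1 < (∑ i, θ i) / 2 + 2 * m := fun m => by
    linarith [(by positivity : (0 : ℝ) ≤ 2 * m)]
  have hQ : ∀ m, 0 ≤ ∑ k ∈ multiIdx n m, ∏ i, besqCoeff (θ i) (x i) (y i) (k i) := fun m =>
    Finset.sum_nonneg fun k _ => Finset.prod_nonneg fun i _ =>
      besqCoeff_nonneg (hθ i) (hx i).le (hy i).le (k i)
  rw [potKernel_eq_tsum θ x y hS]
  refine integral_eq_tsum_of_ofReal_eq_tsum ((ae_restrict_iff' measurableSet_Ioi).mpr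
    (Eventually.of_forall fun t (ht : 0 < t) =>
      ⟨Finset.prod_nonneg fun i _ => besqDens_nonneg ht (hθ i) (hx i).le (hy i),
        ofReal_prod_besqDens hθ hx hy ht⟩)) (fun m => by fun_prop) (fun m => ?_) (fun m => ?_)
  · simp_rw [ENNReal.ofReal_mul (hQ m)]
    rw [lintegral_const_mul _ (by fun_prop),
      lintegral_rpow_neg_mul_exp_neg_div (ha m) (by positivity)]
  · have := Gamma_pos_of_pos (sub_pos.mpr (ha m))
    have := hQ m
    positivity
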